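/- arXiv:2604.01571 — 2 statements merged into one kernel-verified Lean document; each statement's English description precedes it below -/
import Mathlib

section
/- Unique-minimizer nonvanishing: Let F be a nonempty set of permutations of Fin m, fix a row r ∈ Fin m, and set k_min = min_{σ ∈ F} σ(r). If there is exactly one permutation σ* ∈ F with σ*(r) = k_min, then the Vandermonde polynomial P_F is not the zero polynomial of ℚ[λ]. -/
open Polynomial

/-- The Vandermonde polynomial of a finite family of permutations of `Fin n`. -/
noncomputable def vand {n : ℕ} (F : Finset (Equiv.Perm (Fin n))) : Polynomial ℚ :=
  ∑ σ ∈ F, Polynomial.C ((Equiv.Perm.sign σ : ℤ) : ℚ) *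
    ∏ i : Fin n, (Polynomial.X + Polynomial.C ((i : ℚ))) ^ ((σ i : ℕ))

/-- Unique-minimizer nonvanishing: if a nonempty family `F` has a unique permutation
achieving `min_{σ ∈ F} σ(r)` at a row `r`, then its Vandermonde polynomial is nonzero. -/
theorem unique_minimizer_nonvanishing {m : ℕ} (F : Finset (Equiv.Perm (Fin m)))
    (hF : F.Nonempty) (r : Fin m)
    (huniq : ∃! σ : Equiv.Perm (Fin m),
      σ ∈ F ∧ (σ r : ℕ) = F.inf' hF (fun σ => (σ r : ℕ))) :
    vand F ≠ 0 := by
  set k := F.inf' hF (fun σ => (σ r : ℕ)) with hk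
  obtain ⟨σs, ⟨hσsF, hσsr⟩, huniqs⟩ := huniq
  have hkle : ∀ σ ∈ F, k ≤ (σ r : ℕ) := fun σ hσ => Finset.inf'_le _ hσ
  -- composed polynomial
  have hcomp : (vand F).comp (X - C (r : ℚ)) =
      ∑ σ ∈ F, C ((Equiv.Perm.sign σ : ℤ) : ℚ) *
        ∏ i : Fin m, (X + C ((i : ℚ) - (r : ℚ))) ^ ((σ i : ℕ)) := by
    rw [vand, Polynomial.sum_comp]
    refine Finset.sum_congr rfl fun σ _ => ?_
    rw [mul_comp, C_comp, prod_comp]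
    congr 1
    refine Finset.prod_congr rfl fun i _ => ?_
    rw [pow_comp, add_comp, X_comp, C_comp, map_sub]
    ring
  -- coefficient of each term
  have hterm : ∀ σ ∈ F, (∏ i : Fin m, (X + C ((i : ℚ) - (r : ℚ))) ^ ((σ i : ℕ))).coeff k =
      if (σ r : ℕ) = k then ∏ i ∈ Finset.univ.erase r, ((i : ℚ) - (r : ℚ)) ^ ((σ i : ℕ))
      else 0 := by
    intro σ hσ
    rw [← Finset.mul_prod_erase Finset.univ _ (Finset.mem_univ r)]
    have : (X + C ((r : ℚ) - (r : ℚ))) ^ ((σ r : ℕ)) = X ^ ((σ r : ℕ)) := by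
      simp
    rw [this, mul_comm, Polynomial.coeff_mul_X_pow']
    by_cases h : (σ r : ℕ) = k
    · simp only [h, if_pos (le_refl k), Nat.sub_self, if_pos]
      rw [Polynomial.coeff_zero_eq_eval_zero]
      simp [Polynomial.eval_prod]
    · rw [if_neg h, if_neg]
      exact fun hle => h (le_antisymm hle (hkle σ hσ))
  -- the k-th coefficient of the composed polynomial is nonzero
  have hne : ((vand F).comp (X - C (r : ℚ))).coeff k ≠ 0 := by
    rw [hcomp, Polynomial.finset_sum_coeff]
    have hsum : ∀ σ ∈ F,
        (C ((Equiv.Perm.sign σ : ℤ) : ℚ) *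
          ∏ i : Fin m, (X + C ((i : ℚ) - (r : ℚ))) ^ ((σ i : ℕ))).coeff k =
        if (σ r : ℕ) = k then ((Equiv.Perm.sign σ : ℤ) : ℚ) *
          ∏ i ∈ Finset.univ.erase r, ((i : ℚ) - (r : ℚ)) ^ ((σ i : ℕ)) else 0 := by
      intro σ hσ
      rw [Polynomial.coeff_C_mul, hterm σ hσ]
      split <;> simp
    rw [Finset.sum_congr rfl hsum,
      Finset.sum_eq_single_of_mem σs hσsF (fun σ hσ hne => if_neg
        (fun h => hne (huniqs σ ⟨hσ, h⟩))), if_pos hσsr]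
    refine mul_ne_zero ?_ (Finset.prod_ne_zero_iff.mpr fun i hi => ?_)
    · simp [Int.cast_eq_zero]
    · apply pow_ne_zero
      rw [sub_ne_zero]
      have : (i : ℕ) ≠ (r : ℕ) := fun h => (Finset.mem_erase.mp hi).1 (Fin.val_injective h)
      exact_mod_cast this
  intro h0
  exact hne (by rw [h0, zero_comp, coeff_zero])
end

section
/- Hall-block convolution (generalized Laplace along a zero block): Let n = p + q with d ≤ q, let A₁ = {0,…,p−1} and A₂ = {p,…,n−1} be the row blocks, and let B₁ = {0,…,p+d−1} and B₂ = {p+d,…,n−1} be the column blocks. There exists a sign function η assigning to each d-element subset T ⊆ B₁ a value η(T) ∈ {1, −1}, depending only on n, p, d and T, such that for every commutative ring R and every n × n matrix M over R satisfying M i j = 0 whenever i ∈ A₁ and j ∈ B₂, one has det M = ∑_{T ⊆ B₁, |T| = d} η(T) · det M[A₁, B₁ ∖ T] · det M[A₂, B₂ ∪ T], where M[S, S′] denotes the square submatrix of M on row set S and column set S′, each taken in increasing order. -/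
/-- The row block `A₁ = {0, …, p−1}` inside `Fin (p+q)`. -/
def rowsA₁ (p q : ℕ) : Finset (Fin (p + q)) :=
  Finset.univ.filter (fun i => (i : ℕ) < p)

/-- The row block `A₂ = {p, …, p+q−1}` inside `Fin (p+q)`. -/
def rowsA₂ (p q : ℕ) : Finset (Fin (p + q)) :=
  Finset.univ.filter (fun i => p ≤ (i : ℕ))

/-- The column block `B₁ = {0, …, p+d−1}` inside `Fin (p+q)`. -/
def colsB₁ (p q d : ℕ) : Finset (Fin (p + q)) :=
  Finset.univ.filter (fun j => (j : ℕ) < p + d)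

/-- The column block `B₂ = {p+d, …, p+q−1}` inside `Fin (p+q)`. -/
def colsB₂ (p q d : ℕ) : Finset (Fin (p + q)) :=
  Finset.univ.filter (fun j => p + d ≤ (j : ℕ))

/-- The square submatrix `M[S, S′]` of `M` on row set `S` and column set `S′`, each
enumerated in increasing order. -/
def subMat {R : Type*} {n k : ℕ} (M : Matrix (Fin n) (Fin n) R)
    (S S' : Finset (Fin n)) (hS : S.card = k) (hS' : S'.card = k) :
    Matrix (Fin k) (Fin k) R :=
  Matrix.of fun a b => M (S.orderEmbOfFin hS a) (S'.orderEmbOfFin hS' b)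

lemma card_filter_coe_lt (n k : ℕ) (h : k ≤ n) :
    ((Finset.univ : Finset (Fin n)).filter (fun i : Fin n => (i : ℕ) < k)).card = k := by
  have heq : ((Finset.univ : Finset (Fin n)).filter (fun i : Fin n => (i : ℕ) < k))
      = (Finset.range k).attachFin
          (fun m hm => lt_of_lt_of_le (Finset.mem_range.mp hm) h) := by
    ext i
    simp [Finset.mem_attachFin]
  rw [heq, Finset.card_attachFin, Finset.card_range]

lemma card_filter_coe_ge (n k : ℕ) (h : k ≤ n) :
    ((Finset.univ : Finset (Fin n)).filter (fun i : Fin n => k ≤ (i : ℕ))).card = n - k := by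
  have h1 := card_filter_coe_lt n k h
  have h2 : ((Finset.univ : Finset (Fin n)).filter (fun i : Fin n => k ≤ (i : ℕ)))
      = ((Finset.univ : Finset (Fin n)).filter (fun i : Fin n => ¬ (i : ℕ) < k)) := by
    ext i; simp [not_lt]
  have h3 := Finset.card_filter_add_card_filter_not
    (s := (Finset.univ : Finset (Fin n))) (p := fun i : Fin n => (i : ℕ) < k)
  rw [Finset.card_univ, Fintype.card_fin] at h3
  rw [h2]
  omega

lemma card_rowsA₁ (p q : ℕ) : (rowsA₁ p q).card = p :=
  card_filter_coe_lt (p + q) p (Nat.le_add_right p q)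

lemma card_rowsA₂ (p q : ℕ) : (rowsA₂ p q).card = q := by
  have := card_filter_coe_ge (p + q) p (Nat.le_add_right p q)
  rw [rowsA₂, this]
  omega

lemma card_sdiff_T (p q d : ℕ) (hd : d ≤ q) (T : Finset (Fin (p + q)))
    (hT : T ∈ (colsB₁ p q d).powersetCard d) :
    (colsB₁ p q d \ T).card = p := by
  rw [Finset.mem_powersetCard] at hT
  have h1 : (colsB₁ p q d).card = p + d :=
    card_filter_coe_lt (p + q) (p + d) (by omega)
  rw [Finset.card_sdiff_of_subset hT.1, h1, hT.2]
  omega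

lemma card_union_T (p q d : ℕ) (hd : d ≤ q) (T : Finset (Fin (p + q)))
    (hT : T ∈ (colsB₁ p q d).powersetCard d) :
    (colsB₂ p q d ∪ T).card = q := by
  rw [Finset.mem_powersetCard] at hT
  have hdisj : Disjoint (colsB₂ p q d) T := by
    rw [Finset.disjoint_left]
    intro a ha haT
    have h1 : p + d ≤ (a : ℕ) := by simpa [colsB₂] using ha
    have h2 : (a : ℕ) < p + d := by simpa [colsB₁] using hT.1 haT
    omega
  have h1 : (colsB₂ p q d).card = (p + q) - (p + d) :=
    card_filter_coe_ge (p + q) (p + d) (by omega)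
  rw [Finset.card_union_of_disjoint hdisj, h1, hT.2]
  omega

/-!
Expand `det M = ∑ π, sign π * ∏ j, M (π j) j` and sort the permutations by the column set
`C = π⁻¹ A₁`. After enumerating `A₁, C` and `A₂, Cᶜ` in increasing order, the permutations with
a given `C` are exactly `σ₁ ⊕ σ₂` with `σ₁ ∈ Perm (Fin p)`, `σ₂ ∈ Perm (Fin q)`, up to one fixed
permutation whose sign is the Laplace sign of `C`; this is the generalized Laplace expansion along
the rows `A₁`. The zero block kills every term whose `C` meets `B₂`, and the remaining `C ⊆ B₁`
are indexed by `T = B₁ \ C`.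
-/

open Finset Equiv

lemma Equiv.Perm.sign_symm_trans_trans_trans {α β : Type*} [DecidableEq α] [Fintype α]
    [DecidableEq β] [Fintype β] (e₁ e₂ : α ≃ β) (π : Perm α) :
    Perm.sign (e₁.symm.trans (π.trans e₂)) = Perm.sign (e₁.symm.trans e₂) * Perm.sign π := by
  rw [← Perm.sign_symm_trans_trans π e₁, ← map_mul]
  congr 1
  ext x
  simp

section BlockEquiv

variable {n k m : ℕ} {S S' C : Finset (Fin n)}

lemma add_eq_of_isCompl (hS : S.card = k) (hS' : S'.card = m) (h : IsCompl S S') :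
    k + m = n := by
  have := S.card_add_card_compl
  rwa [h.compl_eq, hS, hS', Fintype.card_fin] at this

lemma card_compl_eq_of_isCompl (hS : S.card = k) (hS' : S'.card = m) (h : IsCompl S S')
    (hC : C.card = k) : Cᶜ.card = m := by
  rw [card_compl, Fintype.card_fin, hC, ← add_eq_of_isCompl hS hS' h, Nat.add_sub_cancel_left]

noncomputable def blockEquiv (hS : S.card = k) (hS' : S'.card = m) (h : IsCompl S S') :
    Fin k ⊕ Fin m ≃ Fin n :=
  Equiv.ofBijective (Sum.elim (S.orderEmbOfFin hS) (S'.orderEmbOfFin hS')) <| by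
    refine (Fintype.bijective_iff_injective_and_card _).2 ⟨?_, ?_⟩
    · refine (S.orderEmbOfFin hS).injective.sumElim (S'.orderEmbOfFin hS').injective ?_
      intro a b hab
      exact disjoint_left.1 h.disjoint (S.orderEmbOfFin_mem hS a)
        (hab ▸ S'.orderEmbOfFin_mem hS' b)
    · simp [add_eq_of_isCompl hS hS' h]

variable {hS : S.card = k} {hS' : S'.card = m} {h : IsCompl S S'}

@[simp] lemma blockEquiv_inl (a : Fin k) :
    blockEquiv hS hS' h (Sum.inl a) = S.orderEmbOfFin hS a := rfl

@[simp] lemma blockEquiv_inr (b : Fin m) :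
    blockEquiv hS hS' h (Sum.inr b) = S'.orderEmbOfFin hS' b := rfl

lemma blockEquiv_mem_iff_isLeft (x : Fin k ⊕ Fin m) :
    blockEquiv hS hS' h x ∈ S ↔ x.isLeft := by
  rcases x with a | b
  · simp [S.orderEmbOfFin_mem hS a]
  · simpa using disjoint_right.1 h.disjoint (S'.orderEmbOfFin_mem hS' b)

end BlockEquiv

section Laplace

variable {n k m : ℕ} {S S' : Finset (Fin n)}
  (hS : S.card = k) (hS' : S'.card = m) (h : IsCompl S S')

noncomputable def laplaceSign (C : Finset (Fin n)) : ℤ :=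
  if hC : C.card = k then
    Perm.sign ((blockEquiv hC (card_compl_eq_of_isCompl hS hS' h hC) isCompl_compl).symm.trans
      (blockEquiv hS hS' h))
  else 1

lemma laplaceSign_eq_one_or_neg_one (C : Finset (Fin n)) :
    laplaceSign hS hS' h C = 1 ∨ laplaceSign hS hS' h C = -1 := by
  unfold laplaceSign
  split_ifs
  · exact Int.isUnit_iff.mp (Units.isUnit _)
  · exact Or.inl rfl

noncomputable def laplacePerm
    (x : {C : Finset (Fin n) // C.card = k} × (Perm (Fin k) × Perm (Fin m))) : Perm (Fin n) :=
  (blockEquiv x.1.2 (card_compl_eq_of_isCompl hS hS' h x.1.2) isCompl_compl).symm.trans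
    ((Equiv.sumCongr x.2.1 x.2.2).trans (blockEquiv hS hS' h))

variable {hS hS' h}

lemma laplacePerm_apply_blockEquiv (C : {C : Finset (Fin n) // C.card = k})
    (σ : Perm (Fin k) × Perm (Fin m)) (y : Fin k ⊕ Fin m) :
    laplacePerm hS hS' h (C, σ)
        (blockEquiv C.2 (card_compl_eq_of_isCompl hS hS' h C.2) isCompl_compl y) =
      blockEquiv hS hS' h (Equiv.sumCongr σ.1 σ.2 y) := by
  simp [laplacePerm]

lemma laplacePerm_apply_mem_iff
    (x : {C : Finset (Fin n) // C.card = k} × (Perm (Fin k) × Perm (Fin m))) (j : Fin n) :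
    laplacePerm hS hS' h x j ∈ S ↔ j ∈ x.1.1 := by
  obtain ⟨y, rfl⟩ :=
    (blockEquiv x.1.2 (card_compl_eq_of_isCompl hS hS' h x.1.2) isCompl_compl).surjective j
  rw [laplacePerm_apply_blockEquiv, blockEquiv_mem_iff_isLeft, blockEquiv_mem_iff_isLeft]
  rcases y with a | b <;> simp

lemma laplacePerm_bijective : Function.Bijective (laplacePerm hS hS' h) := by
  constructor
  · rintro ⟨C, σ⟩ ⟨C', σ'⟩ hσ
    have hC : C = C' := Subtype.ext <| Finset.ext fun j => by
      rw [← laplacePerm_apply_mem_iff (hS := hS) (hS' := hS') (h := h) (C, σ),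
        ← laplacePerm_apply_mem_iff (hS := hS) (hS' := hS') (h := h) (C', σ'), hσ]
    subst hC
    have hsum : Perm.sumCongrHom _ _ σ = Perm.sumCongrHom _ _ σ' := by
      ext1 y
      refine (blockEquiv hS hS' h).injective ?_
      rw [Perm.sumCongrHom_apply, Perm.sumCongrHom_apply, ← laplacePerm_apply_blockEquiv,
        ← laplacePerm_apply_blockEquiv, hσ]
    rw [Perm.sumCongrHom_injective hsum]
  · intro π
    -- the columns that `π` sends into `S`
    let C : {C : Finset (Fin n) // C.card = k} :=
      ⟨S.map π.symm.toEmbedding, by rw [card_map, hS]⟩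
    let eC := blockEquiv C.2 (card_compl_eq_of_isCompl hS hS' h C.2) isCompl_compl
    have hmaps : Set.MapsTo ((eC.trans π).trans (blockEquiv hS hS' h).symm)
        (Set.range Sum.inl) (Set.range Sum.inl) := by
      rintro _ ⟨a, rfl⟩
      have hmem : eC (Sum.inl a) ∈ C.1 := (blockEquiv_mem_iff_isLeft (Sum.inl a)).2 rfl
      rw [mem_map_equiv, symm_symm, ← Equiv.apply_symm_apply (blockEquiv hS hS' h) (π _),
        blockEquiv_mem_iff_isLeft, Sum.isLeft_iff] at hmem
      obtain ⟨a', ha'⟩ := hmem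
      exact ⟨a', ha'.symm⟩
    obtain ⟨σ, hσ⟩ := Perm.mem_sumCongrHom_range_of_perm_mapsTo_inl hmaps
    refine ⟨(C, σ), ?_⟩
    ext1 j
    simp only [laplacePerm, trans_apply, show Equiv.sumCongr σ.1 σ.2 = _ from hσ,
      apply_symm_apply]
    exact congrArg π (eC.apply_symm_apply j)

variable {R : Type*} [CommRing R]

lemma sign_laplacePerm
    (x : {C : Finset (Fin n) // C.card = k} × (Perm (Fin k) × Perm (Fin m))) :
    (Perm.sign (laplacePerm hS hS' h x) : ℤ) =
      laplaceSign hS hS' h x.1 * Perm.sign x.2.1 * Perm.sign x.2.2 := by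
  rw [laplacePerm, Perm.sign_symm_trans_trans_trans, laplaceSign, dif_pos x.1.2,
    Perm.sign_sumCongr]
  push_cast
  ring

lemma prod_laplacePerm (M : Matrix (Fin n) (Fin n) R)
    (x : {C : Finset (Fin n) // C.card = k} × (Perm (Fin k) × Perm (Fin m))) :
    ∏ j, M (laplacePerm hS hS' h x j) j =
      (∏ a, subMat M S x.1 hS x.1.2 (x.2.1 a) a) *
        ∏ b, subMat M S' (x.1 : Finset (Fin n))ᶜ hS'
          (card_compl_eq_of_isCompl hS hS' h x.1.2) (x.2.2 b) b := by
  rw [← (blockEquiv x.1.2 (card_compl_eq_of_isCompl hS hS' h x.1.2) isCompl_compl).prod_comp,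
    Fintype.prod_sum_type]
  congr 1 <;> refine Finset.prod_congr rfl fun _ _ => ?_ <;>
    rw [laplacePerm_apply_blockEquiv] <;> rfl

variable (hS hS' h) in
theorem det_eq_sum_laplaceSign_mul_det_mul_det (M : Matrix (Fin n) (Fin n) R) :
    M.det = ∑ C : {C : Finset (Fin n) // C.card = k},
      (laplaceSign hS hS' h C : R) * (subMat M S C hS C.2).det *
        (subMat M S' (C : Finset (Fin n))ᶜ hS' (card_compl_eq_of_isCompl hS hS' h C.2)).det := by
  rw [Matrix.det_apply', ← Fintype.sum_bijective _ (laplacePerm_bijective (hS := hS)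
    (hS' := hS') (h := h)) _ _ fun _ => rfl, Fintype.sum_prod_type]
  refine Fintype.sum_congr _ _ fun C => ?_
  rw [Matrix.det_apply', Matrix.det_apply', mul_assoc, Finset.sum_mul_sum, Fintype.sum_prod_type]
  simp only [Finset.mul_sum]
  refine Fintype.sum_congr _ _ fun σ₁ => Fintype.sum_congr _ _ fun σ₂ => ?_
  rw [sign_laplacePerm (C, (σ₁, σ₂)), prod_laplacePerm M (C, (σ₁, σ₂))]
  push_cast
  ring

end Laplace

lemma Finset.card_sdiff_of_mem_powersetCard {α : Type*} [DecidableEq α] {B T : Finset α}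
    {p d : ℕ} (hB : B.card = p + d) (hT : T ∈ B.powersetCard d) : (B \ T).card = p := by
  rw [mem_powersetCard] at hT
  rw [card_sdiff_of_subset hT.1, hB, hT.2, Nat.add_sub_cancel]

lemma Finset.sum_eq_sum_attach_powersetCard_sdiff {α M : Type*} [Fintype α] [DecidableEq α]
    [AddCommMonoid M] {B : Finset α} {p d : ℕ} (hB : B.card = p + d)
    (f : {C : Finset α // C.card = p} → M)
    (hf : ∀ C : {C : Finset α // C.card = p}, ¬ (C : Finset α) ⊆ B → f C = 0) :
    ∑ C, f C =
      ∑ T ∈ (B.powersetCard d).attach, f ⟨B \ T, card_sdiff_of_mem_powersetCard hB T.2⟩ := by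
  symm
  refine sum_bij_ne_zero (fun T _ _ => ⟨B \ T, card_sdiff_of_mem_powersetCard hB T.2⟩)
    (fun _ _ _ => mem_univ _) ?_ ?_ fun _ _ _ => rfl
  · rintro ⟨T, hT⟩ - - ⟨T', hT'⟩ - - hTT'
    rw [mem_powersetCard] at hT hT'
    simpa [sdiff_sdiff_eq_self hT.1, sdiff_sdiff_eq_self hT'.1] using
      congrArg (B \ ·.1) hTT'
  · rintro C - hC
    have hCB : (C : Finset α) ⊆ B := by_contra fun h => hC (hf C h)
    have hBC : B \ C ∈ B.powersetCard d := by
      rw [mem_powersetCard, card_sdiff_of_subset hCB, hB, C.2]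
      exact ⟨sdiff_subset, by omega⟩
    exact ⟨⟨B \ C, hBC⟩, mem_attach _ _, by simpa [sdiff_sdiff_eq_self hCB] using hC,
      Subtype.ext (sdiff_sdiff_eq_self hCB)⟩

lemma det_subMat_eq_zero_of_mem {R : Type*} [CommRing R] {n k : ℕ}
    {M : Matrix (Fin n) (Fin n) R} {S S' : Finset (Fin n)} (hS : S.card = k)
    (hS' : S'.card = k) {j : Fin n} (hj : j ∈ S') (hzero : ∀ i ∈ S, M i j = 0) :
    (subMat M S S' hS hS').det = 0 := by
  obtain ⟨b, rfl⟩ : j ∈ Set.range (S'.orderEmbOfFin hS') := by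
    rwa [range_orderEmbOfFin]
  exact Matrix.det_eq_zero_of_column_eq_zero b fun a => hzero _ (S.orderEmbOfFin_mem hS a)

lemma isCompl_rowsA₁_rowsA₂ (p q : ℕ) : IsCompl (rowsA₁ p q) (rowsA₂ p q) := by
  have h : rowsA₂ p q = (rowsA₁ p q)ᶜ := by
    ext i
    simp [rowsA₁, rowsA₂]
  exact h ▸ isCompl_compl

lemma card_colsB₁ (p q d : ℕ) (hd : d ≤ q) : (colsB₁ p q d).card = p + d :=
  card_filter_coe_lt (p + q) (p + d) (by omega)

lemma compl_colsB₁_sdiff (p q d : ℕ) (T : Finset (Fin (p + q))) :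
    (colsB₁ p q d \ T)ᶜ = colsB₂ p q d ∪ T := by
  ext j
  by_cases hj : j ∈ T <;> simp [colsB₁, colsB₂, hj]

/-- Hall-block convolution (generalized Laplace expansion along a zero block): for
`n = p + q` and `d ≤ q`, there is a sign function `η(T) ∈ {1, −1}`, depending only on
`n, p, d, T`, such that for every commutative ring `R` and every `n × n` matrix `M`
with `M i j = 0` whenever `i ∈ A₁` and `j ∈ B₂`, one has
`det M = ∑_{T ⊆ B₁, |T| = d} η(T) · det M[A₁, B₁ ∖ T] · det M[A₂, B₂ ∪ T]`. -/
theorem hall_block_convolution (p q d : ℕ) (hd : d ≤ q) :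
    ∃ η : Finset (Fin (p + q)) → ℤ,
      (∀ T ∈ (colsB₁ p q d).powersetCard d, η T = 1 ∨ η T = -1) ∧
      ∀ (R : Type*) [CommRing R] (M : Matrix (Fin (p + q)) (Fin (p + q)) R),
        (∀ i j : Fin (p + q), (i : ℕ) < p → p + d ≤ (j : ℕ) → M i j = 0) →
        M.det = ∑ T ∈ ((colsB₁ p q d).powersetCard d).attach,
          (η T.1 : R) *
            (subMat M (rowsA₁ p q) (colsB₁ p q d \ T.1)
              (card_rowsA₁ p q) (card_sdiff_T p q d hd T.1 T.2)).det *
            (subMat M (rowsA₂ p q) (colsB₂ p q d ∪ T.1)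
              (card_rowsA₂ p q) (card_union_T p q d hd T.1 T.2)).det := by
  have hA := isCompl_rowsA₁_rowsA₂ p q
  refine ⟨fun T => laplaceSign (card_rowsA₁ p q) (card_rowsA₂ p q) hA (colsB₁ p q d \ T),
    fun T _ => laplaceSign_eq_one_or_neg_one _ _ _ _, fun R _ M hM => ?_⟩
  rw [det_eq_sum_laplaceSign_mul_det_mul_det (card_rowsA₁ p q) (card_rowsA₂ p q) hA M,
    sum_eq_sum_attach_powersetCard_sdiff (card_colsB₁ p q d hd)]
  · refine sum_congr rfl fun T _ => ?_
    congr 3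
    exact compl_colsB₁_sdiff p q d T
  · intro C hC
    obtain ⟨j, hjC, hjB⟩ := not_subset.1 hC
    rw [det_subMat_eq_zero_of_mem (S := rowsA₁ p q) _ _ hjC fun i hi =>
      hM i j (by simpa [rowsA₁] using hi) (by simpa [colsB₁] using hjB), mul_zero, zero_mul]
end
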